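/- Let P ⊂ ℝ^d_{≥0} be an anti-blocking lattice polytope of dimension d. Then h*(P^±, x) = ∑_{j=0}^d 2^j (x−1)^{d−j} ∑_{J ⊆ [d], |J| = j} h*(π_J(P), x), where for J = {j_1,…,j_r} ⊆ [d], π_J : ℝ^d → ℝ^r denotes the coordinate projection π_J(x_1,…,x_d) = (x_{j_1},…,x_{j_r}) (with π_∅ the zero map, so h*(π_∅(P), x) = 1). -/

import Mathlib

open scoped Pointwise
open Polynomial

namespace ABP

variable {V : Type*}

/-- A point of `ℝ^V` all of whose coordinates are integers. -/
def IsLatticePoint (x : V → ℝ) : Prop := ∀ i, ∃ z : ℤ, x i = (z : ℝ)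

/-- A lattice polytope: the convex hull of finitely many lattice points. -/
def IsLatticePolytope [Fintype V] (P : Set (V → ℝ)) : Prop :=
  ∃ S : Finset (V → ℝ), (∀ v ∈ S, IsLatticePoint v) ∧ P = convexHull ℝ (S : Set (V → ℝ))

/-- The dimension of a polytope, as the rank of its vector span. -/
noncomputable def polyDim [Fintype V] (P : Set (V → ℝ)) : ℕ :=
  Module.finrank ℝ (vectorSpan ℝ P)

/-- The number of lattice points of the `m`-th dilate of `P`. -/
noncomputable def latticeCount [Fintype V] (P : Set (V → ℝ)) (m : ℕ) : ℕ :=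
  Set.ncard {x : V → ℤ | (fun i => (x i : ℝ)) ∈ (m : ℝ) • P}

/-- `h` is the `h^*`-polynomial of the lattice polytope `P`:
`(1 + ∑_{m≥1} L_P(m) x^m) · (1-x)^{dim P + 1} = h` as formal power series. -/
def IsHStar [Fintype V] (P : Set (V → ℝ)) (h : Polynomial ℝ) : Prop :=
  (PowerSeries.mk fun m => if m = 0 then (1 : ℝ) else (latticeCount P m : ℝ)) *
      (1 - PowerSeries.X) ^ (polyDim P + 1) = (h : PowerSeries ℝ)

/-- `f` is γ-positive: `f = ∑ γ_i x^i (1+x)^{deg f - 2i}` with all `γ_i ≥ 0`. -/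
def GammaPositive (f : Polynomial ℝ) : Prop :=
  ∃ γ : ℕ → ℝ, (∀ i, 0 ≤ γ i) ∧
    f = ∑ i ∈ Finset.range (f.natDegree / 2 + 1),
      Polynomial.C (γ i) * Polynomial.X ^ i * (1 + Polynomial.X) ^ (f.natDegree - 2 * i)

/-- A real polynomial is real-rooted if all of its complex roots are real. -/
def RealRooted (f : Polynomial ℝ) : Prop :=
  ∀ z : ℂ, (f.map (algebraMap ℝ ℂ)).IsRoot z → z.im = 0

/-- The `±1`-vector associated to `ε : V → Bool`. -/
def signVec (ε : V → Bool) : V → ℝ := fun i => if ε i then 1 else -1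

/-- The unconditional set `P^± = {εx : ε ∈ {-1,1}^V, x ∈ P}`. -/
def uncond (P : Set (V → ℝ)) : Set (V → ℝ) :=
  {y | ∃ (ε : V → Bool) (x : V → ℝ), x ∈ P ∧ y = signVec ε * x}

/-- The closed orthant `ℝ^V_ε`. -/
def orthant (ε : V → Bool) : Set (V → ℝ) := {x | ∀ i, 0 ≤ signVec ε i * x i}

/-- Anti-blocking set: contained in the nonnegative orthant and downward closed there. -/
def IsAntiBlocking (P : Set (V → ℝ)) : Prop :=
  (∀ x ∈ P, ∀ i, 0 ≤ x i) ∧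
    ∀ y ∈ P, ∀ x : V → ℝ, (∀ i, 0 ≤ x i ∧ x i ≤ y i) → x ∈ P

/-- Locally anti-blocking (full-dimensional) lattice polytope. -/
def LocallyAntiBlocking [Fintype V] (P : Set (V → ℝ)) : Prop :=
  ∀ ε : V → Bool, ∃ Q : Set (V → ℝ), IsLatticePolytope Q ∧ IsAntiBlocking Q ∧
    polyDim Q = Fintype.card V ∧ P ∩ orthant ε = uncond Q ∩ orthant ε

/-- The dual (polar) body of `P`. -/
def dualPoly [Fintype V] (P : Set (V → ℝ)) : Set (V → ℝ) :=
  {y | ∀ x ∈ P, ∑ i, x i * y i ≤ 1}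

/-- `P` is a reflexive polytope. -/
def IsReflexive [Fintype V] (P : Set (V → ℝ)) : Prop :=
  IsLatticePolytope P ∧ (0 : V → ℝ) ∈ interior P ∧ IsLatticePolytope (dualPoly P)

/-- The `i`-th unit coordinate vector. -/
def unitVec [DecidableEq V] (i : V) : V → ℝ := fun j => if j = i then 1 else 0

/-- Symmetric edge polytope of type A: `conv{±(e_i - e_j) : {i,j} ∈ E(G)}`. -/
def symEdgeA [DecidableEq V] (G : SimpleGraph V) : Set (V → ℝ) :=
  convexHull ℝ {v | ∃ i j, G.Adj i j ∧ v = unitVec i - unitVec j}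

/-- The polytope `B_G = conv({0, e_1, …, e_d} ∪ {e_i + e_j : {i,j} ∈ E(G)})`. -/
def typeBBase [DecidableEq V] (G : SimpleGraph V) : Set (V → ℝ) :=
  convexHull ℝ ({0} ∪ {v | ∃ i, v = unitVec i} ∪
    {v | ∃ i j, G.Adj i j ∧ v = unitVec i + unitVec j})

/-- Symmetric edge polytope of type B: `𝓑_G = (B_G)^±`. -/
def symEdgeB [DecidableEq V] (G : SimpleGraph V) : Set (V → ℝ) := uncond (typeBBase G)

/-- The suspension of a graph on `Fin d`: a new vertex joined to all old vertices. -/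
def suspension {d : ℕ} (G : SimpleGraph (Fin d)) : SimpleGraph (Fin (d + 1)) :=
  SimpleGraph.fromRel (fun a b =>
    (∃ p q : Fin d, G.Adj p q ∧ a = p.castSucc ∧ b = q.castSucc) ∨
      (a ≠ Fin.last d ∧ b = Fin.last d))

/-- The cut `E_S` of `G`, as a spanning subgraph of `G`. -/
def cutGraph [DecidableEq V] (G : SimpleGraph V) (S : Finset V) : SimpleGraph V :=
  SimpleGraph.fromRel (fun a b => G.Adj a b ∧ ((a ∈ S) ↔ (b ∉ S)))

/-- Contraction of the edge `{i,j}`: merge `j` into `i` (the vertex `j` becomes isolated,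
so that the resulting polytopes are the same as for the contracted graph on `d-1` vertices). -/
def contractEdge {d : ℕ} (G : SimpleGraph (Fin d)) (i j : Fin d) : SimpleGraph (Fin d) :=
  SimpleGraph.fromRel (fun a b => a ≠ j ∧ b ≠ j ∧
    (G.Adj a b ∨ (a = i ∧ G.Adj j b) ∨ (b = i ∧ G.Adj a j)))

/-- The graph `G̃` attached to a bipartite graph `G` with bipartition `V₁ ∪ V₁ᶜ`. -/
def tildeGraph {d : ℕ} (G : SimpleGraph (Fin d)) (V1 : Finset (Fin d)) :
    SimpleGraph (Fin (d + 2)) :=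
  SimpleGraph.fromRel (fun a b =>
    (∃ p q : Fin d, G.Adj p q ∧ a = p.castSucc.castSucc ∧ b = q.castSucc.castSucc) ∨
    (∃ p ∈ V1, a = (p.castSucc.castSucc : Fin (d + 2)) ∧ b = (⟨d, by omega⟩ : Fin (d + 2))) ∨
    (∃ p : Fin d, p ∉ V1 ∧ a = p.castSucc.castSucc ∧ b = (⟨d + 1, by omega⟩ : Fin (d + 2))) ∨
    (a = (⟨d, by omega⟩ : Fin (d + 2)) ∧ b = (⟨d + 1, by omega⟩ : Fin (d + 2))))

/-- Unimodular (lattice) equivalence of polytopes. -/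
def UnimodEquiv {n m : ℕ} (P : Set (Fin n → ℝ)) (Q : Set (Fin m → ℝ)) : Prop :=
  ∃ (f : (Fin n → ℝ) →ᵃ[ℝ] (Fin m → ℝ)) (g : (Fin m → ℝ) →ᵃ[ℝ] (Fin n → ℝ)),
    f '' P = Q ∧ g '' Q = P ∧ (∀ x ∈ P, g (f x) = x) ∧ (∀ y ∈ Q, f (g y) = y) ∧
    (∀ x, IsLatticePoint x → IsLatticePoint (f x)) ∧
    (∀ y, IsLatticePoint y → IsLatticePoint (g y))

/-- A subgraph is 2-connected: connected, and still connected after deleting any vertex. -/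
def TwoConnSub {G : SimpleGraph V} (B : G.Subgraph) : Prop :=
  B.Connected ∧ ∀ v ∈ B.verts, (B.deleteVerts {v}).Connected

/-- A block (2-connected component) of `G`: a maximal 2-connected subgraph. -/
def IsBlock (G : SimpleGraph V) (B : G.Subgraph) : Prop :=
  TwoConnSub B ∧ ∀ B' : G.Subgraph, B ≤ B' → TwoConnSub B' → B' = B

/-- The coordinate projection `π_J` of a subset of `ℝ^d` onto `ℝ^{|J|}`. -/
def projSet {d : ℕ} (J : Finset (Fin d)) (P : Set (Fin d → ℝ)) : Set (Fin J.card → ℝ) :=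
  (fun (x : Fin d → ℝ) (k : Fin J.card) => x (J.orderEmbOfFin rfl k)) '' P

section Posets

variable {d : ℕ}

/-- `A` is an antichain of the poset `P` on `Fin d`. -/
def IsPosetAntichain (P : PartialOrder (Fin d)) (A : Finset (Fin d)) : Prop :=
  ∀ i ∈ A, ∀ j ∈ A, i ≠ j → ¬ P.lt i j ∧ ¬ P.lt j i

/-- The chain polytope of a poset on `Fin d`. -/
def chainPoly (P : PartialOrder (Fin d)) : Set (Fin d → ℝ) :=
  convexHull ℝ {x | ∃ A : Finset (Fin d), IsPosetAntichain P A ∧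
    x = fun i => if i ∈ A then (1 : ℝ) else 0}

/-- The enriched chain polytope `C_P^(e) = (C_P)^±`. -/
def enrichedChainPoly (P : PartialOrder (Fin d)) : Set (Fin d → ℝ) := uncond (chainPoly P)

/-- The twinned chain polytope `C_{P,Q} = conv(C_P ∪ -C_Q)`. -/
def twinnedChainPoly (P Q : PartialOrder (Fin d)) : Set (Fin d → ℝ) :=
  convexHull ℝ (chainPoly P ∪ -(chainPoly Q))

/-- The order polytope of a poset on `Fin d`. -/
def orderPoly (P : PartialOrder (Fin d)) : Set (Fin d → ℝ) :=
  {x | (∀ i, 0 ≤ x i ∧ x i ≤ 1) ∧ ∀ i j, P.lt i j → x i ≤ x j}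

/-- A poset on `Fin d` is naturally labeled. -/
def NaturallyLabeled (P : PartialOrder (Fin d)) : Prop := ∀ i j, P.lt i j → i < j

/-- `π` (as a listing `π 0, π 1, …`) is a linear extension of `P`. -/
def IsLinearExtension (P : PartialOrder (Fin d)) (π : Fin d → Fin d) : Prop :=
  Function.Bijective π ∧ ∀ a b, P.lt (π a) (π b) → a < b

/-- The sequence of (1-based) labels of the listing `π`, with sentinel `π_0 = 0`. -/
def seqOf (π : Fin d → Fin d) (k : ℕ) : ℕ :=
  if h : 1 ≤ k ∧ k ≤ d then (π ⟨k - 1, by omega⟩).val + 1 else 0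

/-- The number of left peaks of the listing `π`. -/
def leftPeakCount (π : Fin d → Fin d) : ℕ :=
  ((Finset.Icc 1 (d - 1)).filter
    (fun i => seqOf π (i - 1) < seqOf π i ∧ seqOf π (i + 1) < seqOf π i)).card

open scoped Classical in
/-- The left peak polynomial `W_P^(ℓ)(x) = ∑_{π ∈ L(P)} x^{pk^(ℓ)(π)}`. -/
noncomputable def leftPeakPoly (P : PartialOrder (Fin d)) : Polynomial ℝ :=
  ∑ π : Equiv.Perm (Fin d),
    if IsLinearExtension P (π : Fin d → Fin d) then
      Polynomial.X ^ leftPeakCount (π : Fin d → Fin d) else 0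

/-- The strict order of the ordinal sum `P_I ⊕ Q_{Iᶜ}` of induced subposets. -/
def ordinalSumLt (P Q : PartialOrder (Fin d)) (I : Set (Fin d)) (i j : Fin d) : Prop :=
  (i ∈ I ∧ j ∈ I ∧ P.lt i j) ∨ (i ∉ I ∧ j ∉ I ∧ Q.lt i j) ∨ (i ∈ I ∧ j ∉ I)

/-- The polynomial `(x+1)^d f(4x/(x+1)^2)` (for `deg f ≤ d/2`). -/
noncomputable def gammaSub (d : ℕ) (f : Polynomial ℝ) : Polynomial ℝ :=
  ∑ k ∈ Finset.range (d + 1),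
    Polynomial.C (f.coeff k * 4 ^ k) * Polynomial.X ^ k * (1 + Polynomial.X) ^ (d - 2 * k)

/-- The Cayley sum `X * Y ⊂ ℝ^{d+1}`. -/
def cayleySum (X Y : Set (Fin d → ℝ)) : Set (Fin (d + 1) → ℝ) :=
  convexHull ℝ ({z | ∃ x ∈ X, z = Fin.snoc x 0} ∪ {z | ∃ y ∈ Y, z = Fin.snoc y 1})

/-- `Ω(X, Y) = conv((X × {1}) ∪ (−Y × {−1})) ⊂ ℝ^{d+1}`. -/
def omegaSum (X Y : Set (Fin d → ℝ)) : Set (Fin (d + 1) → ℝ) :=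
  convexHull ℝ ({z | ∃ x ∈ X, z = Fin.snoc x 1} ∪ {z | ∃ y ∈ Y, z = -(Fin.snoc y 1)})

/-- `Γ(X, Y) = conv(X ∪ (−Y))`. -/
def gammaSum (X Y : Set (Fin d → ℝ)) : Set (Fin d → ℝ) :=
  convexHull ℝ (X ∪ -Y)

/-- Enriched `(P,Q)`-partition. -/
def IsEnrichedPQPartition (P Q : PartialOrder (Fin d)) (f : Fin d → ℤ) : Prop :=
  (∀ x y, P.lt x y → 0 ≤ f x → 0 ≤ f y → f x ≤ f y) ∧
  (∀ x y, Q.lt x y → f x ≤ 0 → f y ≤ 0 → f y ≤ f x)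

/-- `M(f) = max({0} ∪ f([d]))`. -/
def maxVal (f : Fin d → ℤ) : ℤ :=
  (insert 0 (Finset.image f Finset.univ)).max' (Finset.insert_nonempty _ _)

/-- `m(f) = min({0} ∪ f([d]))`. -/
def minVal (f : Fin d → ℤ) : ℤ :=
  (insert 0 (Finset.image f Finset.univ)).min' (Finset.insert_nonempty _ _)

/-- The number of enriched `(P,Q)`-partitions `f` with `M(f) - m(f) ≤ m`. -/
noncomputable def OmegaPQ (P Q : PartialOrder (Fin d)) (m : ℕ) : ℕ :=
  Set.ncard {f : Fin d → ℤ | IsEnrichedPQPartition P Q f ∧ maxVal f - minVal f ≤ (m : ℤ)}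

end Posets

section Faces

variable [Fintype V]

/-- `F` is a face of `P` (cut out by a supporting linear functional). -/
def IsFace (P F : Set (V → ℝ)) : Prop :=
  ∃ (c : V → ℝ) (b : ℝ), (∀ x ∈ P, ∑ i, c i * x i ≤ b) ∧ F = {x ∈ P | ∑ i, c i * x i = b}

/-- `F` is a facet of `P`: a face of dimension `dim P - 1`. -/
def IsFacet (P F : Set (V → ℝ)) : Prop :=
  IsFace P F ∧ polyDim F + 1 = polyDim P

/-- `F` is a simplex: the convex hull of affinely independent points. -/
def IsSimplexSet (F : Set (V → ℝ)) : Prop :=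
  ∃ S : Finset (V → ℝ), AffineIndependent ℝ (fun v : S => (v : V → ℝ)) ∧
    F = convexHull ℝ (S : Set (V → ℝ))

end Faces

end ABP

open ABP
/-!
A lattice point `y` lies in `m P^±` iff `|y|` lies in `m P`, because `P` sits in the nonnegative
orthant; hence `L_{P^±}(m) = ∑_{x ∈ mP ∩ ℤ^d} 2^{|supp x|}`. Since `P` is anti-blocking, the lattice
points of `m π_J(P)` are those of `m P` supported in `J`. Substituting
`2^{|I|} = ∑_{J ⊇ I} (-1)^{d-|J|} 2^{|J|}` and exchanging the sums turns this into
`L_{P^±}(m) = ∑_J (-1)^{d-|J|} 2^{|J|} L_{π_J(P)}(m)`, and multiplying the Ehrhart series by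
`(1-x)^{d+1} = (1-x)^{d-|J|} (1-x)^{|J|+1}` gives the formula for the `h^*`-polynomials.
-/

open Finset

namespace ABP

section Combinatorics

variable {ι R : Type*} [Fintype ι] [DecidableEq ι] [CommRing R]

theorem sum_superset_neg_one_pow_mul_two_pow (I : Finset ι) :
    ∑ J : Finset ι, (if I ⊆ J then (-1 : R) ^ #Jᶜ * 2 ^ #J else 0) = 2 ^ #I := by
  -- expand `∏ i, (2 + g i)` where `g i = -1` off `I` and `g i = 0` on `I`
  have key := Fintype.prod_add (fun _ : ι => (2 : R)) (fun i => if i ∉ I then -1 else 0)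
  refine Eq.trans (Finset.sum_congr rfl fun J _ => ?_) (key.symm.trans ?_)
  · simp only [Finset.prod_ite_zero, Finset.prod_const, Finset.mem_compl, not_imp_not,
      ← Finset.subset_iff]
    split_ifs <;> ring
  · have : ∀ i, (2 + if i ∉ I then (-1 : R) else 0) = if i ∈ I then 2 else 1 := fun i => by
      split_ifs <;> norm_num
    simp only [this, Finset.prod_ite_mem, Finset.univ_inter, Finset.prod_const]

theorem sum_two_pow_card_eq_sum_filter_subset {α : Type*} (s : Finset α) (supp : α → Finset ι) :
    ∑ x ∈ s, (2 : R) ^ #(supp x) =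
      ∑ J : Finset ι, (-1 : R) ^ #Jᶜ * 2 ^ #J * #{x ∈ s | supp x ⊆ J} := by
  calc ∑ x ∈ s, (2 : R) ^ #(supp x)
      = ∑ x ∈ s, ∑ J : Finset ι, if supp x ⊆ J then (-1 : R) ^ #Jᶜ * 2 ^ #J else 0 := by
        simp only [sum_superset_neg_one_pow_mul_two_pow]
    _ = _ := by
        rw [Finset.sum_comm]
        refine Finset.sum_congr rfl fun J _ => ?_
        rw [← Finset.sum_filter, Finset.sum_const, nsmul_eq_mul, mul_comm]

end Combinatorics

section LatticePoints

variable {V : Type*}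

def latticePoints (Q : Set (V → ℝ)) : Set (V → ℤ) := {x | (fun i => (x i : ℝ)) ∈ Q}

theorem latticeCount_eq_ncard [Fintype V] (Q : Set (V → ℝ)) (m : ℕ) :
    latticeCount Q m = (latticePoints ((m : ℝ) • Q)).ncard := rfl

theorem finite_latticePoints [Fintype V] {Q : Set (V → ℝ)} (hQ : Bornology.IsBounded Q) :
    (latticePoints Q).Finite := by
  have : AntilipschitzWith 1 (fun (x : V → ℤ) i => (x i : ℝ)) :=
    AntilipschitzWith.of_le_mul_dist fun x y => by
      rw [NNReal.coe_one, one_mul]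
      exact (dist_pi_le_iff dist_nonneg).2 fun i =>
        Int.dist_cast_real (x i) (y i) ▸
          dist_le_pi_dist (fun i => (x i : ℝ)) (fun i => (y i : ℝ)) i
  exact (this.isBounded_preimage hQ).isCompact_closure.finite_of_discrete.subset subset_closure

theorem IsLatticePolytope.isBounded [Fintype V] {P : Set (V → ℝ)} (hP : IsLatticePolytope P) :
    Bornology.IsBounded P := by
  obtain ⟨S, -, rfl⟩ := hP
  exact (S.finite_toSet.isCompact_convexHull ℝ).isBounded

end LatticePoints

theorem IsAntiBlocking.smul {V : Type*} {P : Set (V → ℝ)} (hP : IsAntiBlocking P) {c : ℝ}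
    (hc : 0 ≤ c) : IsAntiBlocking (c • P) := by
  refine ⟨fun _ ⟨x, hx, hcx⟩ i => hcx ▸ mul_nonneg hc (hP.1 x hx i), ?_⟩
  rintro _ ⟨p, hp, rfl⟩ x hx
  rcases hc.eq_or_lt with rfl | hc
  · have : x = 0 := funext fun i => le_antisymm (by simpa using (hx i).2) (hx i).1
    exact ⟨p, hp, by simp [this]⟩
  · refine ⟨c⁻¹ • x, hP.2 p hp _ fun i => ?_, smul_inv_smul₀ hc.ne' x⟩
    simp only [Pi.smul_apply, smul_eq_mul]
    exact ⟨mul_nonneg (inv_nonneg.2 hc.le) (hx i).1, (inv_mul_le_iff₀ hc).2 (hx i).2⟩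

section Unconditional

variable {V : Type*}

theorem subset_uncond (P : Set (V → ℝ)) : P ⊆ uncond P :=
  fun x hx => ⟨fun _ => true, x, hx, by ext; simp [signVec]⟩

theorem vectorSpan_uncond_eq_top {P : Set (V → ℝ)} (hP : vectorSpan ℝ P = ⊤) :
    vectorSpan ℝ (uncond P) = ⊤ :=
  top_le_iff.1 (hP ▸ vectorSpan_mono ℝ (subset_uncond P))

theorem smul_uncond (c : ℝ) (P : Set (V → ℝ)) : c • uncond P = uncond (c • P) := by
  ext y
  constructor
  · rintro ⟨_, ⟨ε, x, hx, rfl⟩, rfl⟩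
    exact ⟨ε, c • x, Set.smul_mem_smul_set hx, (mul_smul_comm c _ x).symm⟩
  · rintro ⟨ε, _, ⟨x, hx, rfl⟩, rfl⟩
    exact ⟨signVec ε * x, ⟨ε, x, hx, rfl⟩, (mul_smul_comm c _ x).symm⟩

theorem mem_uncond_iff_abs_mem {Q : Set (V → ℝ)} (hQ : ∀ x ∈ Q, ∀ i, 0 ≤ x i) {y : V → ℝ} :
    y ∈ uncond Q ↔ |y| ∈ Q := by
  constructor
  · rintro ⟨ε, x, hx, rfl⟩
    convert hx using 1
    ext i
    simp only [Pi.abs_apply, Pi.mul_apply, abs_mul, signVec, abs_of_nonneg (hQ x hx i)]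
    split <;> simp
  · refine fun h => ⟨fun i => decide (0 ≤ y i), |y|, h, funext fun i => ?_⟩
    simp only [signVec, Pi.mul_apply, Pi.abs_apply, decide_eq_true_eq]
    split_ifs with hy
    · rw [abs_of_nonneg hy, one_mul]
    · rw [abs_of_neg (not_le.1 hy)]; ring

theorem latticePoints_uncond {Q : Set (V → ℝ)} (hQ : ∀ x ∈ Q, ∀ i, 0 ≤ x i) :
    latticePoints (uncond Q) = {y | |y| ∈ latticePoints Q} := by
  ext y
  simp only [latticePoints, Set.mem_ofPred_eq, mem_uncond_iff_abs_mem hQ]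
  congr!
  simp

variable [Fintype V] [DecidableEq V]

theorem abs_eq_iff_mem_piFinset {x y : V → ℤ} (hx : 0 ≤ x) :
    |y| = x ↔ y ∈ Fintype.piFinset fun i => {x i, -x i} := by
  simp only [funext_iff, Pi.abs_apply, Fintype.mem_piFinset, Finset.mem_insert,
    Finset.mem_singleton, abs_eq (hx _)]

theorem card_piFinset_pair (x : V → ℤ) :
    #(Fintype.piFinset fun i => {x i, -x i}) = 2 ^ #{i | x i ≠ 0} := by
  rw [Fintype.card_piFinset, Finset.card_filter, ← Finset.prod_pow_eq_pow_sum]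
  refine Finset.prod_congr rfl fun i _ => ?_
  by_cases hi : x i = 0
  · simp [hi]
  · rw [Finset.card_pair (by omega), if_pos hi, pow_one]

theorem ncard_abs_preimage {S : Finset (V → ℤ)} (hS : ∀ x ∈ S, 0 ≤ x) :
    {y : V → ℤ | |y| ∈ S}.ncard = ∑ x ∈ S, 2 ^ #{i | x i ≠ 0} := by
  have hfib : {y : V → ℤ | |y| ∈ S} =
      ↑(S.biUnion fun x => Fintype.piFinset fun i => {x i, -x i}) := by
    ext y
    simp only [Set.mem_ofPred_eq, Finset.coe_biUnion, Set.mem_iUnion, Finset.mem_coe, exists_prop]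
    constructor
    · exact fun hy => ⟨|y|, hy, (abs_eq_iff_mem_piFinset (hS _ hy)).1 rfl⟩
    · rintro ⟨x, hx, hy⟩
      rwa [(abs_eq_iff_mem_piFinset (hS x hx)).2 hy]
  rw [hfib, Set.ncard_coe_finset, Finset.card_biUnion]
  · simp only [card_piFinset_pair]
  · refine fun x hx x' hx' hne => Finset.disjoint_left.2 fun y hy hy' => hne ?_
    rw [← (abs_eq_iff_mem_piFinset (hS x hx)).2 hy, (abs_eq_iff_mem_piFinset (hS x' hx')).2 hy']

end Unconditional

section Projection

variable {d : ℕ} (J : Finset (Fin d))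

theorem projSet_eq_image_funLeft (P : Set (Fin d → ℝ)) :
    projSet J P = LinearMap.funLeft ℝ ℝ (J.orderEmbOfFin rfl) '' P := rfl

theorem smul_projSet (c : ℝ) (P : Set (Fin d → ℝ)) : c • projSet J P = projSet J (c • P) := by
  rw [projSet_eq_image_funLeft, projSet_eq_image_funLeft, image_smul_set]

theorem extend_orderEmbOfFin_comp {M : Type*} [Zero M] {x : Fin d → M} (hx : ∀ i ∉ J, x i = 0) :
    Function.extend (J.orderEmbOfFin rfl) (x ∘ J.orderEmbOfFin rfl) 0 = x := by
  funext i
  by_cases hi : i ∈ J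
  · obtain ⟨k, rfl⟩ : i ∈ Set.range (J.orderEmbOfFin rfl) := by
      rwa [Finset.range_orderEmbOfFin]
    exact (J.orderEmbOfFin rfl).injective.extend_apply _ _ k
  · rw [Function.extend_apply', hx i hi]
    · rfl
    · rintro ⟨k, rfl⟩
      exact hi (J.orderEmbOfFin_mem rfl k)

theorem mem_projSet_iff {Q : Set (Fin d → ℝ)} (hQ : IsAntiBlocking Q) {y : Fin #J → ℝ} :
    y ∈ projSet J Q ↔ Function.extend (J.orderEmbOfFin rfl) y 0 ∈ Q := by
  constructor
  · rintro ⟨p, hp, rfl⟩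
    refine hQ.2 p hp _ fun i => ?_
    by_cases hi : ∃ k, J.orderEmbOfFin rfl k = i
    · obtain ⟨k, rfl⟩ := hi
      rw [(J.orderEmbOfFin rfl).injective.extend_apply]
      exact ⟨hQ.1 p hp _, le_rfl⟩
    · rw [Function.extend_apply' _ _ _ hi]
      exact ⟨le_rfl, hQ.1 p hp i⟩
  · intro h
    exact ⟨_, h, Function.extend_comp (J.orderEmbOfFin rfl).injective y 0⟩

theorem ncard_latticePoints_projSet {Q : Set (Fin d → ℝ)} (hQ : IsAntiBlocking Q) :
    (latticePoints (projSet J Q)).ncard = {x ∈ latticePoints Q | ∀ i ∉ J, x i = 0}.ncard := by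
  set e := J.orderEmbOfFin rfl
  have hcast (y : Fin #J → ℤ) :
      (fun i => ((Function.extend e y 0 i : ℤ) : ℝ)) = Function.extend e (fun k => (y k : ℝ)) 0 :=
    funext fun i => by
      convert Function.apply_extend (g := y) (Int.cast : ℤ → ℝ) e 0 i using 2
      all_goals funext; simp
  have himage : (fun y => Function.extend e y 0) '' latticePoints (projSet J Q) =
      {x ∈ latticePoints Q | ∀ i ∉ J, x i = 0} := by
    ext x
    constructor
    · rintro ⟨y, hy, rfl⟩
      refine ⟨by rw [latticePoints, Set.mem_ofPred_eq, hcast]; exact (mem_projSet_iff J hQ).1 hy,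
        fun i hi => Function.extend_apply' _ _ _ ?_⟩
      rintro ⟨k, rfl⟩
      exact hi (J.orderEmbOfFin_mem rfl k)
    · rintro ⟨hx, hsupp⟩
      refine ⟨x ∘ e, ?_, extend_orderEmbOfFin_comp J hsupp⟩
      rw [latticePoints, Set.mem_ofPred_eq, mem_projSet_iff J hQ]
      have hext := extend_orderEmbOfFin_comp J (x := fun i => (x i : ℝ)) fun i hi => by
        simp [hsupp i hi]
      exact (congrArg (· ∈ Q) hext).mpr hx
  rw [← himage, Set.ncard_image_of_injective _ (Function.extend_injective e.injective 0)]

theorem vectorSpan_projSet_eq_top {P : Set (Fin d → ℝ)} (hP : vectorSpan ℝ P = ⊤) :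
    vectorSpan ℝ (projSet J P) = ⊤ := by
  set f := LinearMap.funLeft ℝ ℝ (J.orderEmbOfFin rfl)
  rw [projSet_eq_image_funLeft, ← f.coe_toAffineMap, ← AffineMap.map_vectorSpan, hP,
    Submodule.map_top]
  exact LinearMap.range_eq_top.2
    (LinearMap.funLeft_surjective_of_injective ℝ ℝ _ (J.orderEmbOfFin rfl).injective)

end Projection

theorem latticeCount_uncond {d : ℕ} {P : Set (Fin d → ℝ)} (hP : IsLatticePolytope P)
    (hab : IsAntiBlocking P) (m : ℕ) :
    (latticeCount (uncond P) m : ℝ) =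
      ∑ J : Finset (Fin d), (-1) ^ (d - #J) * 2 ^ #J * (latticeCount (projSet J P) m : ℝ) := by
  have hQ : IsAntiBlocking ((m : ℝ) • P) := hab.smul m.cast_nonneg
  set S := (finite_latticePoints (hP.isBounded.smul₀ (m : ℝ))).toFinset
  have hS : ∀ x ∈ S, 0 ≤ x := fun x hx i => by
    rw [Set.Finite.mem_toFinset] at hx
    exact_mod_cast hQ.1 _ hx i
  have hunc : latticeCount (uncond P) m = ∑ x ∈ S, 2 ^ #{i | x i ≠ 0} := by
    rw [latticeCount_eq_ncard, smul_uncond, latticePoints_uncond hQ.1, ← ncard_abs_preimage hS]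
    simp [S]
  have hproj (J : Finset (Fin d)) :
      latticeCount (projSet J P) m = #{x ∈ S | ({i | x i ≠ 0} : Finset _) ⊆ J} := by
    rw [latticeCount_eq_ncard, smul_projSet, ncard_latticePoints_projSet J hQ,
      ← Set.ncard_coe_finset]
    congr 1
    ext x
    simp [S, Finset.subset_iff, not_imp_comm]
  simp only [hunc, hproj, Nat.cast_sum, Nat.cast_pow, Nat.cast_ofNat,
    sum_two_pow_card_eq_sum_filter_subset, Finset.card_compl, Fintype.card_fin]

theorem polyDim_eq_card_iff {V : Type*} [Fintype V] {P : Set (V → ℝ)} :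
    polyDim P = Fintype.card V ↔ vectorSpan ℝ P = ⊤ := by
  rw [Submodule.eq_top_iff_finrank_eq, Module.finrank_fintype_fun_eq_card, polyDim]

section EhrhartSeries

variable {V : Type*} [Fintype V]

noncomputable def ehrhartSeries (Q : Set (V → ℝ)) : PowerSeries ℝ :=
  PowerSeries.mk fun m => if m = 0 then 1 else (latticeCount Q m : ℝ)

theorem isHStar_iff {Q : Set (V → ℝ)} {h : ℝ[X]} :
    IsHStar Q h ↔ ehrhartSeries Q * (1 - PowerSeries.X) ^ (polyDim Q + 1) = (h : PowerSeries ℝ) :=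
  Iff.rfl

end EhrhartSeries

theorem ehrhartSeries_uncond {d : ℕ} {P : Set (Fin d → ℝ)} (hP : IsLatticePolytope P)
    (hab : IsAntiBlocking P) :
    ehrhartSeries (uncond P) = ∑ J : Finset (Fin d),
      PowerSeries.C ((-1) ^ (d - #J) * 2 ^ #J) * ehrhartSeries (projSet J P) := by
  ext m
  simp only [ehrhartSeries, map_sum, PowerSeries.coeff_C_mul, PowerSeries.coeff_mk]
  split_ifs
  · simpa [Finset.card_compl] using
      (sum_superset_neg_one_pow_mul_two_pow (R := ℝ) (∅ : Finset (Fin d))).symm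
  · exact latticeCount_uncond hP hab m

end ABP

/-- Proposition: h* of the unconditional polytope of an anti-blocking polytope.
For an anti-blocking lattice polytope `P ⊂ ℝ^d_{≥0}` of dimension `d`,
`h*(P^±, x) = ∑_{J ⊆ [d]} 2^{|J|} (x-1)^{d-|J|} h*(π_J(P), x)`. -/
theorem hstar_uncond_formula {d : ℕ} (P : Set (Fin d → ℝ))
    (hlat : IsLatticePolytope P) (hab : IsAntiBlocking P) (hdim : polyDim P = d)
    (h : Polynomial ℝ) (hh : IsHStar (uncond P) h)
    (hJ : Finset (Fin d) → Polynomial ℝ)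
    (hhJ : ∀ J : Finset (Fin d), IsHStar (projSet J P) (hJ J)) :
    h = ∑ J : Finset (Fin d),
      (2 : Polynomial ℝ) ^ J.card * (Polynomial.X - 1) ^ (d - J.card) * hJ J := by
  have hspan : vectorSpan ℝ P = ⊤ := polyDim_eq_card_iff.1 (by rw [hdim, Fintype.card_fin])
  have hdimJ (J : Finset (Fin d)) : polyDim (projSet J P) = #J := by
    simpa using polyDim_eq_card_iff.2 (vectorSpan_projSet_eq_top J hspan)
  have hdimU : polyDim (uncond P) = d := by
    simpa using polyDim_eq_card_iff.2 (vectorSpan_uncond_eq_top hspan)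
  rw [isHStar_iff, hdimU, ehrhartSeries_uncond hlat hab, Finset.sum_mul] at hh
  rw [← Polynomial.coe_inj, ← hh, ← Polynomial.coeToPowerSeries.ringHom_apply, map_sum]
  refine Finset.sum_congr rfl fun J _ => ?_
  have hJd : #J ≤ d := (Finset.card_le_univ J).trans_eq (Fintype.card_fin d)
  have hstarJ := isHStar_iff.1 (hhJ J)
  rw [hdimJ] at hstarJ
  have hsign : (PowerSeries.X - 1 : PowerSeries ℝ) ^ (d - #J) =
      (-1) ^ (d - #J) * (1 - PowerSeries.X) ^ (d - #J) := by
    rw [← neg_pow, neg_sub]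
  simp only [map_mul, map_pow, map_sub, map_neg, map_one, map_ofNat,
    Polynomial.coeToPowerSeries.ringHom_apply, Polynomial.coe_X, ← hstarJ, hsign]
  rw [show d + 1 = d - #J + (#J + 1) by omega, pow_add]
  ring
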